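/- arXiv:2303.00731 — 2 statements merged into one kernel-verified Lean document; each statement's English description precedes it below -/
import Mathlib

section
/- For every real number c > 0, the integral ∫₀¹ y·tanh(c·y) dy equals 1/2 − π²/(24c²) + ln(1 + e^{−2c})/c − Li₂(−e^{−2c})/(2c²), where Li₂ denotes the dilogarithm (polylogarithm of order 2). -/
/-!
For `y > 0` put `e = exp (-2 c y) ∈ (0, 1)`, so that `tanh (c y) = 1 - 2 e / (1 + e)`. Integrating
by parts, with `Li₂'(x) = -log (1 - x) / x` on `0 < |x| < 1` (termwise differentiation of the
series), gives the antiderivative `F(y) = y² / 2 + y log (1 + e) / c - Li₂(-e) / (2 c²)` of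
`y tanh (c y)`. It is continuous up to `y = 0` because the dilogarithm series converges uniformly
on `[-1, 1]`, and `F(0) = -Li₂(-1) / (2 c²) = π² / (24 c²)` by `Li₂(x) + Li₂(-x) = Li₂(x²) / 2`
and `Li₂(1) = ζ(2) = π² / 6`.
-/

open Real

/-- The dilogarithm `Li₂(x) = Σ_{n≥1} xⁿ/n²`. -/
noncomputable def Li2 (x : ℝ) : ℝ := ∑' n : ℕ, x ^ (n + 1) / ((n : ℝ) + 1) ^ 2

open Set

lemma hasSum_one_div_nat_add_one_sq : HasSum (fun n : ℕ => 1 / ((n : ℝ) + 1) ^ 2) (π ^ 2 / 6) := by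
  simpa using (hasSum_nat_add_iff' 1).mpr hasSum_zeta_two

lemma norm_Li2_term_le {x : ℝ} (hx : |x| ≤ 1) (n : ℕ) :
    ‖x ^ (n + 1) / ((n : ℝ) + 1) ^ 2‖ ≤ 1 / ((n : ℝ) + 1) ^ 2 := by
  rw [norm_div, norm_pow, Real.norm_eq_abs, Real.norm_eq_abs,
    abs_of_pos (by positivity : (0 : ℝ) < ((n : ℝ) + 1) ^ 2)]
  gcongr
  exact pow_le_one₀ (abs_nonneg x) hx

lemma hasSum_Li2 {x : ℝ} (hx : |x| ≤ 1) :
    HasSum (fun n : ℕ => x ^ (n + 1) / ((n : ℝ) + 1) ^ 2) (Li2 x) :=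
  (hasSum_one_div_nat_add_one_sq.summable.of_norm_bounded (norm_Li2_term_le hx)).hasSum

lemma Li2_one : Li2 1 = π ^ 2 / 6 := by
  simpa [Li2] using hasSum_one_div_nat_add_one_sq.tsum_eq

lemma Li2_add_Li2_neg {x : ℝ} (hx : |x| ≤ 1) : Li2 x + Li2 (-x) = Li2 (x ^ 2) / 2 := by
  have hx2 : |x ^ 2| ≤ 1 := by rw [abs_pow]; exact pow_le_one₀ (abs_nonneg x) hx
  set f : ℕ → ℝ := fun n => x ^ (n + 1) / ((n : ℝ) + 1) ^ 2 + (-x) ^ (n + 1) / ((n : ℝ) + 1) ^ 2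
  have hodd_powers : HasSum (fun k => f (2 * k)) 0 := by
    simp [f, Odd.neg_pow (odd_two_mul_add_one _), neg_div]
  have heven_powers : HasSum (fun k => f (2 * k + 1)) (Li2 (x ^ 2) / 2) := by
    refine ((hasSum_Li2 hx2).div_const 2).congr_fun fun k => ?_
    simp only [f]
    rw [Even.neg_pow ⟨k + 1, by ring⟩, ← pow_mul]
    push_cast
    field_simp
    ring
  have h := hodd_powers.even_add_odd heven_powers
  rw [zero_add] at h
  exact ((hasSum_Li2 hx).add (hasSum_Li2 (by rwa [abs_neg]))).unique h

lemma Li2_neg_one : Li2 (-1) = -(π ^ 2 / 12) := by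
  have h := Li2_add_Li2_neg (x := 1) (by simp)
  rw [one_pow, Li2_one] at h
  linarith

lemma continuousOn_Li2 : ContinuousOn Li2 (Icc (-1) 1) :=
  continuousOn_tsum (fun n => by fun_prop) hasSum_one_div_nat_add_one_sq.summable
    fun n x hx => norm_Li2_term_le (abs_le.mpr hx) n

lemma hasSum_pow_div_nat_add_one {x : ℝ} (hx : |x| < 1) (hx0 : x ≠ 0) :
    HasSum (fun n : ℕ => x ^ n / ((n : ℝ) + 1)) (-log (1 - x) / x) :=
  ((hasSum_pow_div_log_of_abs_lt_one hx).div_const x).congr_fun fun n => by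
    field_simp
    ring

lemma hasDerivAt_Li2 {x : ℝ} (hx : |x| < 1) (hx0 : x ≠ 0) :
    HasDerivAt Li2 (-log (1 - x) / x) x := by
  obtain ⟨r, hxr, hr⟩ := exists_between hx
  have hx_mem : x ∈ Metric.ball 0 r := by rwa [mem_ball_zero_iff, norm_eq_abs]
  rw [← (hasSum_pow_div_nat_add_one hx hx0).tsum_eq]
  refine hasDerivAt_tsum_of_isPreconnected (g := fun (n : ℕ) z => z ^ (n + 1) / ((n : ℝ) + 1) ^ 2)
    (g' := fun (n : ℕ) z => z ^ n / ((n : ℝ) + 1))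
    (summable_geometric_of_lt_one ((abs_nonneg x).trans hxr.le) hr)
    Metric.isOpen_ball (convex_ball 0 r).isPreconnected (fun n y _ => ?_) (fun n y hy => ?_)
    hx_mem (hasSum_Li2 hx.le).summable hx_mem
  · refine ((hasDerivAt_pow (n + 1) y).div_const (((n : ℝ) + 1) ^ 2)).congr_deriv ?_
    rw [Nat.add_sub_cancel]
    push_cast
    field_simp
  · rw [mem_ball_zero_iff] at hy
    rw [norm_div, norm_pow, norm_of_nonneg (by positivity : (0:ℝ) ≤ n + 1)]
    calc ‖y‖ ^ n / (n + 1) ≤ ‖y‖ ^ n :=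
          div_le_self (by positivity) (by linarith [n.cast_nonneg (α := ℝ)])
      _ ≤ r ^ n := by gcongr

lemma Real.tanh_eq_one_sub_exp (x : ℝ) : tanh x = 1 - 2 * exp (-2 * x) / (1 + exp (-2 * x)) := by
  have h : exp (-2 * x) = (exp x)⁻¹ ^ 2 := by rw [← exp_neg, ← exp_nat_mul]; ring_nf
  rw [tanh_eq, exp_neg, h]
  field_simp
  ring

lemma Real.continuous_tanh : Continuous tanh := by
  simp only [funext tanh_eq_sinh_div_cosh]
  exact continuous_sinh.div continuous_cosh fun x => (cosh_pos x).ne'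

noncomputable def mulTanhAntideriv (c y : ℝ) : ℝ :=
  y ^ 2 / 2 + y * log (1 + exp (-2 * c * y)) / c - Li2 (-exp (-2 * c * y)) / (2 * c ^ 2)

lemma continuousOn_mulTanhAntideriv {c : ℝ} (hc : 0 ≤ c) :
    ContinuousOn (mulTanhAntideriv c) (Ici 0) := by
  have hLi2 : ContinuousOn (fun y => Li2 (-exp (-2 * c * y))) (Ici 0) := by
    refine continuousOn_Li2.comp (by fun_prop) fun y (hy : 0 ≤ y) => ?_
    have : exp (-2 * c * y) ≤ 1 := exp_le_one_iff.mpr (by nlinarith)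
    constructor <;> linarith [exp_pos (-2 * c * y)]
  unfold mulTanhAntideriv
  refine ContinuousOn.sub ?_ (hLi2.div_const _)
  exact Continuous.continuousOn (by fun_prop (disch := exact fun y => by positivity))

lemma hasDerivAt_mulTanhAntideriv {c y : ℝ} (hc : c ≠ 0) (hcy : 0 < c * y) :
    HasDerivAt (mulTanhAntideriv c) (y * tanh (c * y)) y := by
  set e := exp (-2 * c * y)
  have he : HasDerivAt (fun y => exp (-2 * c * y)) (e * (-2 * c)) y := by
    simpa only [id, mul_one] using ((hasDerivAt_id y).const_mul (-2 * c)).exp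
  have he_pos : 0 < e := exp_pos _
  have he_lt : e < 1 := exp_lt_one_iff.mpr (by linarith)
  have hLi2 : HasDerivAt Li2 (-log (1 + e) / -e) (-e) := by
    simpa using hasDerivAt_Li2 (x := -e) (by rwa [abs_neg, abs_of_pos he_pos])
      (neg_ne_zero.mpr he_pos.ne')
  have h := (((hasDerivAt_pow 2 y).div_const 2).add
    (((hasDerivAt_id y).mul ((he.const_add 1).log (by positivity))).div_const c)).sub
    ((hLi2.comp y he.neg).div_const (2 * c ^ 2))
  refine h.congr_deriv ?_
  rw [tanh_eq_one_sub_exp, show -2 * (c * y) = -2 * c * y by ring]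
  simp only [id, show exp (-2 * c * y) = e from rfl]
  field_simp
  ring

theorem integral_mul_tanh_eq (c : ℝ) (hc : 0 < c) :
    ∫ y in (0:ℝ)..1, y * Real.tanh (c * y) =
      1 / 2 - π ^ 2 / (24 * c ^ 2) + Real.log (1 + Real.exp (-2 * c)) / c
        - Li2 (-Real.exp (-2 * c)) / (2 * c ^ 2) := by
  have hint : IntervalIntegrable (fun y => y * tanh (c * y)) MeasureTheory.volume 0 1 :=
    (continuous_id.mul (continuous_tanh.comp (continuous_const_mul c))).intervalIntegrable 0 1
  rw [intervalIntegral.integral_eq_sub_of_hasDeriv_right_of_le zero_le_one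
    ((continuousOn_mulTanhAntideriv hc.le).mono Icc_subset_Ici_self)
    (fun y hy => (hasDerivAt_mulTanhAntideriv hc.ne' (mul_pos hc hy.1)).hasDerivWithinAt) hint]
  simp only [mulTanhAntideriv, mul_one, mul_zero, exp_zero, Li2_neg_one]
  field_simp
  ring
end

section
/- Let 0 < h < 1/2 and set g = (√2/3)·√(1 + (1 − 3h)·√(1 + 6h)). Then g > 0 and g satisfies 2·(2h³ − 2h²·√(h² + g²) + g²·√(h² + g²))/(3g⁴) = 1. -/
theorem tfi_rootxy_order_parameter (h : ℝ) (hh : 0 < h) (hh2 : h < 1 / 2) :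
    let g := (Real.sqrt 2 / 3) * Real.sqrt (1 + (1 - 3 * h) * Real.sqrt (1 + 6 * h))
    0 < g ∧
    2 * (2 * h ^ 3 - 2 * h ^ 2 * Real.sqrt (h ^ 2 + g ^ 2)
      + g ^ 2 * Real.sqrt (h ^ 2 + g ^ 2)) / (3 * g ^ 4) = 1 := by
  intro g
  have h6 : (0:ℝ) < 1 + 6 * h := by linarith
  set s : ℝ := Real.sqrt (1 + 6 * h) with hsdef
  have hs0 : 0 ≤ s := Real.sqrt_nonneg _
  have hs2 : s ^ 2 = 1 + 6 * h := Real.sq_sqrt h6.le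
  have hslt : s < 2 := by nlinarith
  have hs1 : 1 < s := by nlinarith
  have hX : 0 < 1 + (1 - 3 * h) * s := by nlinarith [sq_nonneg (s + 1)]
  have hg2 : g ^ 2 = (2 + 3 * s - s ^ 3) / 9 := by
    show ((Real.sqrt 2 / 3) * Real.sqrt (1 + (1 - 3 * h) * s)) ^ 2 = _
    rw [mul_pow, div_pow, Real.sq_sqrt (by norm_num : (0:ℝ) ≤ 2),
      Real.sq_sqrt hX.le]
    linear_combination (s / 9) * hs2
  have hg0 : 0 < g := by
    apply mul_pos (div_pos (Real.sqrt_pos.2 (by norm_num)) (by norm_num))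
      (Real.sqrt_pos.2 hX)
  have hr : Real.sqrt (h ^ 2 + g ^ 2) = (3 + 2 * s - s ^ 2) / 6 := by
    rw [show h ^ 2 + g ^ 2 = ((3 + 2 * s - s ^ 2) / 6) ^ 2 by
      rw [hg2]; linear_combination (-(s ^ 2) / 36 - h / 6 + 1 / 36) * hs2]
    exact Real.sqrt_sq (by nlinarith)
  refine ⟨hg0, ?_⟩
  rw [hr, div_eq_one_iff_eq (by positivity)]
  have hg4 : g ^ 4 = ((2 + 3 * s - s ^ 3) / 9) ^ 2 := by
    rw [show g ^ 4 = (g ^ 2) ^ 2 by ring, hg2]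
  rw [hg4, hg2]
  linear_combination (-s ^ 4 / 27 + s ^ 3 / 27 - 2 * s ^ 2 * h / 9 + s ^ 2 / 9
    + 2 * s * h / 9 - s / 27 - 2 * h ^ 2 / 3 + 4 * h / 9 - 2 / 27) * hs2
end
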